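/- For all σ > 0, θ ∈ [0,1] and α, β ∈ ℝ, one has e^{σ|α|} e^{σ|β|} − e^{σ|α+β|} ≤ [2σ min(|α|, |β|)]^θ e^{σ|α|} e^{σ|β|}. -/

import Mathlib

open MeasureTheory Filter
open scoped ENNReal

/-- The spatial Fourier transform `f̂(ξ) = ∫ e^{-ixξ} f(x) dx`. -/
noncomputable def FT (f : ℝ → ℂ) (ξ : ℝ) : ℂ :=
  ∫ x : ℝ, Complex.exp (-Complex.I * (x * ξ)) * f x

/-- The spacetime Fourier transform `ũ(ξ,τ) = ∫∫ e^{-i(tτ+xξ)} u(x,t) dx dt`. -/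
noncomputable def FT2 (u : ℝ → ℝ → ℂ) (ξ τ : ℝ) : ℂ :=
  ∫ t : ℝ, ∫ x : ℝ, Complex.exp (-Complex.I * (t * τ + x * ξ)) * u x t

/-- The Gevrey norm `‖f‖_{G^{σ,s}} = ‖e^{σ|ξ|}(1+|ξ|)^s f̂(ξ)‖_{L²_ξ}`, valued in `[0,∞]`. -/
noncomputable def gevreyNorm (σ s : ℝ) (f : ℝ → ℂ) : ℝ≥0∞ :=
  (∫⁻ ξ : ℝ, ENNReal.ofReal
    ((Real.exp (σ * |ξ|) * (1 + |ξ|) ^ s * ‖FT f ξ‖) ^ 2)) ^ (1/2 : ℝ)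

/-- The weighted `L²_{ξ,τ}` norm defining `X^{σ,s,b}`, applied to a function `w`
on the Fourier side. -/
noncomputable def XNormW (σ s b : ℝ) (w : ℝ → ℝ → ℂ) : ℝ≥0∞ :=
  (∫⁻ p : ℝ × ℝ, ENNReal.ofReal
    ((Real.exp (σ * |p.1|) * (1 + |p.1|) ^ s * (1 + |p.2 - p.1 ^ 3|) ^ b *
      ‖w p.1 p.2‖) ^ 2)) ^ (1/2 : ℝ)

/-- The Gevrey–Bourgain norm `‖u‖_{X^{σ,s,b}}`. -/
noncomputable def XNorm (σ s b : ℝ) (u : ℝ → ℝ → ℂ) : ℝ≥0∞ :=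
  XNormW σ s b (FT2 u)

/-- The restriction norm `‖u‖_{X^{σ,s,b}(δ)} = inf {‖v‖_{X^{σ,s,b}} : v = u on ℝ × (-δ,δ)}`. -/
noncomputable def XdNorm (σ s b δ : ℝ) (u : ℝ → ℝ → ℂ) : ℝ≥0∞ :=
  ⨅ (v : ℝ → ℝ → ℂ) (_ : ∀ x t : ℝ, t ∈ Set.Ioo (-δ) δ → v x t = u x t),
    XNorm σ s b v

/-- `u` satisfies the KdV equation `u_t + u_{xxx} + u u_x = 0` at the point `(x,t)`. -/
def SolvesKdVAt (u : ℝ → ℝ → ℝ) (x t : ℝ) : Prop :=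
  deriv (fun t' => u x t') t + iteratedDeriv 3 (fun y => u y t) x
    + u x t * deriv (fun y => u y t) x = 0

/-- `u` solves the KdV Cauchy problem with datum `u₀` on the time interval `(-δ,δ)`. -/
def IsKdVSol (u₀ : ℝ → ℝ) (δ : ℝ) (u : ℝ → ℝ → ℝ) : Prop :=
  (∀ x : ℝ, u x 0 = u₀ x) ∧ ∀ x : ℝ, ∀ t ∈ Set.Ioo (-δ) δ, SolvesKdVAt u x t

/-- `u ∈ C([-δ,δ], G^{σ,s})`: each time slice lies in `G^{σ,s}` and `t ↦ u(t)` is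
continuous on `[-δ,δ]` with respect to the `G^{σ,s}` norm. -/
def CtsIntoGevrey (σ s δ : ℝ) (u : ℝ → ℝ → ℝ) : Prop :=
  (∀ t ∈ Set.Icc (-δ) δ, gevreyNorm σ s (fun x => (u x t : ℂ)) ≠ ⊤) ∧
  ∀ t₀ ∈ Set.Icc (-δ) δ, ∀ ε : ℝ, 0 < ε → ∃ η : ℝ, 0 < η ∧
    ∀ t ∈ Set.Icc (-δ) δ, |t - t₀| < η →
      gevreyNorm σ s (fun x => ((u x t - u x t₀ : ℝ) : ℂ)) < ENNReal.ofReal ε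

/-- The spatial Fourier multiplier with symbol `m(ξ)` (one space variable). -/
noncomputable def mult1 (m : ℝ → ℝ) (f : ℝ → ℂ) (x : ℝ) : ℂ :=
  (1 / (2 * Real.pi)) * ∫ ξ : ℝ, Complex.exp (Complex.I * (x * ξ)) * (m ξ : ℂ) * FT f ξ

/-- The spatial Fourier multiplier with symbol `m(ξ)`, acting on functions of `(x,t)`. -/
noncomputable def mult2 (m : ℝ → ℝ) (u : ℝ → ℝ → ℂ) (x t : ℝ) : ℂ :=
  mult1 m (fun y => u y t) x

/-- The spacetime Fourier transform of `B_ρ(u,v)`. -/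
noncomputable def BFT (ρ : ℝ) (u v : ℝ → ℝ → ℂ) (ξ τ : ℝ) : ℂ :=
  ∫ p : ℝ × ℝ, (((min |ξ - p.1| |p.1|) ^ ρ : ℝ) : ℂ) *
    FT2 u (ξ - p.1) (τ - p.2) * FT2 v p.1 p.2

/-- The Airy group `W(t) = e^{-t∂_x³}`, the Fourier multiplier with symbol `e^{itξ³}`. -/
noncomputable def airy (u₀ : ℝ → ℂ) (x t : ℝ) : ℂ :=
  (1 / (2 * Real.pi)) * ∫ ξ : ℝ, Complex.exp (Complex.I * (x * ξ + t * ξ ^ 3)) * FT u₀ ξ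

/-- The Duhamel integral `∫₀ᵗ W(t-t') F(t') dt'`. -/
noncomputable def duhamel (F : ℝ → ℝ → ℂ) (x t : ℝ) : ℂ :=
  ∫ t' in (0:ℝ)..t, airy (fun y => F y t') x (t - t')

/-! Since `|α + β| ≥ |α| + |β| - 2 min(|α|, |β|)`, the term `e^{σ|α+β|}` is at least
`e^{-t} e^{σ|α|} e^{σ|β|}` with `t = 2σ min(|α|, |β|)`, and `1 - e^{-t} ≤ min(1, t) ≤ t^θ`. -/

open Real

lemma one_sub_exp_neg_le_rpow {t θ : ℝ} (ht : 0 ≤ t) (hθ0 : 0 ≤ θ) (hθ1 : θ ≤ 1) :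
    1 - exp (-t) ≤ t ^ θ := by
  rcases le_or_gt t 1 with ht1 | ht1
  · calc 1 - exp (-t) ≤ t := by linarith [add_one_le_exp (-t)]
      _ = t ^ (1 : ℝ) := (rpow_one t).symm
      _ ≤ t ^ θ := rpow_le_rpow_of_exponent_ge' ht ht1 hθ0 hθ1
  · calc 1 - exp (-t) ≤ 1 := by linarith [exp_pos (-t)]
      _ = t ^ (0 : ℝ) := (rpow_zero t).symm
      _ ≤ t ^ θ := rpow_le_rpow_of_exponent_le ht1.le hθ0

lemma abs_add_abs_sub_two_mul_min_le_abs_add (α β : ℝ) :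
    |α| + |β| - 2 * min |α| |β| ≤ |α + β| := by
  have hαβ : |α| - |β| ≤ |α + β| := by simpa using abs_sub_abs_le_abs_sub α (-β)
  have hβα : |β| - |α| ≤ |α + β| := by simpa [add_comm] using abs_sub_abs_le_abs_sub β (-α)
  rcases le_total |α| |β| with h | h
  · rw [min_eq_left h]; linarith
  · rw [min_eq_right h]; linarith

/-- For `σ > 0`, `θ ∈ [0,1]` and `α, β ∈ ℝ`,
`e^{σ|α|} e^{σ|β|} − e^{σ|α+β|} ≤ (2σ min(|α|,|β|))^θ e^{σ|α|} e^{σ|β|}`. -/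
theorem exp_symbol_estimate (σ θ α β : ℝ) (hσ : 0 < σ) (hθ0 : 0 ≤ θ) (hθ1 : θ ≤ 1) :
    Real.exp (σ * |α|) * Real.exp (σ * |β|) - Real.exp (σ * |α + β|) ≤
      (2 * σ * min |α| |β|) ^ θ * (Real.exp (σ * |α|) * Real.exp (σ * |β|)) := by
  set t := 2 * σ * min |α| |β|
  have ht : 0 ≤ t := by positivity
  rw [← exp_add, ← mul_add]
  have hdecay : exp (σ * (|α| + |β|)) * exp (-t) ≤ exp (σ * |α + β|) := by
    rw [← exp_add, exp_le_exp]
    have := mul_le_mul_of_nonneg_left (abs_add_abs_sub_two_mul_min_le_abs_add α β) hσ.le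
    linarith
  calc exp (σ * (|α| + |β|)) - exp (σ * |α + β|)
      ≤ exp (σ * (|α| + |β|)) - exp (σ * (|α| + |β|)) * exp (-t) := by linarith
    _ = (1 - exp (-t)) * exp (σ * (|α| + |β|)) := by ring
    _ ≤ t ^ θ * exp (σ * (|α| + |β|)) := by gcongr; exact one_sub_exp_neg_le_rpow ht hθ0 hθ1
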